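/- Let Y_1, …, Y_n be independent random vectors in ℝ^M (M ≥ 3) with zero mean and E[|Y_i|_∞²] < ∞ for each i. Then E[|Σ_{i=1}^n Y_i|_∞²] ≤ (2e·log M − e) · Σ_{i=1}^n E[|Y_i|_∞²], where |·|_∞ is the sup-norm on ℝ^M. -/

import Mathlib

open MeasureTheory ProbabilityTheory Real Finset Filter Topology

/-!
Take `p = 2 log M` and `ψ(x) = ‖x‖_p² = (∑ |x_j|^p)^(2/p)`. Then
`‖x‖_∞² ≤ ψ(x) ≤ M^(2/p) ‖x‖_∞² = e ‖x‖_∞²`, and `ψ` is `(p - 1)`-smooth: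
`ψ(x + y) ≤ ψ(x) + ⟨∇ψ(x), y⟩ + (p - 1) ψ(y)`. The latter is a second-order Taylor bound along
`t ↦ x + t y`, whose second derivative is controlled by Hölder's inequality with exponents
`p / (p - 2)` and `p / 2`. For independent centred summands the gradient term has mean zero, so
induction gives `E ψ(∑ Y_i) ≤ (p - 1) ∑ E ψ(Y_i)`, and comparing `ψ` with `‖·‖_∞²` on both sides
yields the constant `(2 log M - 1) e`.
-/

lemma hasDerivAt_abs_rpow_mul_self {r : ℝ} (hr : 0 < r) (u : ℝ) :
    HasDerivAt (fun v : ℝ => |v| ^ r * v) ((r + 1) * |u| ^ r) u := by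
  rcases eq_or_ne u 0 with rfl | hu
  · have hlim : Tendsto (fun v : ℝ => |v| ^ r) (𝓝 0) (𝓝 0) := by
      simpa [zero_rpow hr.ne'] using
        ((continuous_abs.rpow_const fun _ => Or.inr hr.le).tendsto (0 : ℝ))
    rw [hasDerivAt_iff_isLittleO_nhds_zero]
    simpa [zero_rpow hr.ne'] using ((Asymptotics.isLittleO_one_iff ℝ).2 hlim).mul_isBigO
      (Asymptotics.isBigO_refl (fun v : ℝ => v) _)
  · have habs : HasDerivAt (fun v : ℝ => |v| ^ r) (r * |u| ^ (r - 1) * SignType.sign u) u :=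
      (hasDerivAt_rpow_const (Or.inl (abs_ne_zero.2 hu))).comp u (hasDerivAt_abs hu)
    refine (habs.fun_mul (hasDerivAt_id' u)).congr_deriv ?_
    rw [mul_one, mul_assoc _ _ u, sign_mul_self, rpow_sub_one (abs_ne_zero.2 hu)]
    field_simp

lemma le_add_deriv_add_of_deriv2_le {f f' f'' : ℝ → ℝ} {c : ℝ}
    (hf : ∀ t, HasDerivAt f (f' t) t) (hf' : ∀ t, HasDerivAt f' (f'' t) t)
    (hc : ∀ t, f'' t ≤ c) : f 1 ≤ f 0 + f' 0 + c / 2 := by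
  have hg : ∀ t, HasDerivAt (fun t => f t - c * t ^ 2 / 2) (f' t - c * t) t := fun t => by
    refine ((hf t).fun_sub (((hasDerivAt_pow 2 t).const_mul c).div_const 2)).congr_deriv ?_
    ring
  have hg' : ∀ t, HasDerivAt (fun t => f' t - c * t) (f'' t - c) t := fun t => by
    simpa using (hf' t).fun_sub ((hasDerivAt_id' t).const_mul c)
  have hanti : Antitone fun t => f' t - c * t :=
    antitone_of_deriv_nonpos (fun t => (hg' t).differentiableAt) fun t => by
      rw [(hg' t).deriv]
      linarith [hc t]
  obtain ⟨ξ, hξ, hslope⟩ := exists_hasDerivAt_eq_slope _ _ zero_lt_one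
    (fun t _ => (hg t).continuousAt.continuousWithinAt) fun t _ => hg t
  have hξ0 : f' ξ - c * ξ ≤ f' 0 - c * 0 := hanti hξ.1.le
  rw [sub_zero, div_one] at hslope
  linarith

lemma hasDerivAt_add_smul_apply {ι : Type*} (x y : ι → ℝ) (j : ι) (t : ℝ) :
    HasDerivAt (fun t : ℝ => (x + t • y) j) (y j) t :=
  (hasDerivAt_mul_const (y j)).const_add (x j)

section LpNormSq

variable {ι : Type*} [Fintype ι] {p : ℝ}

noncomputable def lpPowSum (p : ℝ) (x : ι → ℝ) : ℝ := ∑ j, |x j| ^ p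

noncomputable def lpNormSq (p : ℝ) (x : ι → ℝ) : ℝ := lpPowSum p x ^ (2 / p)

noncomputable def lpNormSqGrad (p : ℝ) (x : ι → ℝ) : ι → ℝ :=
  fun j => 2 * lpPowSum p x ^ (2 / p - 1) * (|x j| ^ (p - 2) * x j)

lemma lpPowSum_nonneg (p : ℝ) (x : ι → ℝ) : 0 ≤ lpPowSum p x :=
  sum_nonneg fun _ _ => rpow_nonneg (abs_nonneg _) p

lemma lpNormSq_nonneg (p : ℝ) (x : ι → ℝ) : 0 ≤ lpNormSq p x :=
  rpow_nonneg (lpPowSum_nonneg p x) _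

lemma lpPowSum_pos (p : ℝ) {x : ι → ℝ} (hx : x ≠ 0) : 0 < lpPowSum p x := by
  obtain ⟨j, hj⟩ := Function.ne_iff.mp hx
  exact sum_pos' (fun _ _ => rpow_nonneg (abs_nonneg _) p)
    ⟨j, mem_univ j, rpow_pos_of_pos (abs_pos.mpr hj) p⟩

lemma lpPowSum_smul (p c : ℝ) (x : ι → ℝ) : lpPowSum p (c • x) = |c| ^ p * lpPowSum p x := by
  simp only [lpPowSum, mul_sum, Pi.smul_apply, smul_eq_mul, abs_mul,
    mul_rpow (abs_nonneg c) (abs_nonneg _)]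

lemma lpNormSq_smul (hp : 0 < p) (c : ℝ) (x : ι → ℝ) :
    lpNormSq p (c • x) = c ^ 2 * lpNormSq p x := by
  rw [lpNormSq, lpPowSum_smul, mul_rpow (rpow_nonneg (abs_nonneg c) p) (lpPowSum_nonneg p x),
    ← rpow_mul (abs_nonneg c), mul_div_cancel₀ 2 hp.ne', rpow_two, sq_abs, lpNormSq]

lemma lpNormSqGrad_smul (hp : 0 < p) (c : ℝ) (x : ι → ℝ) :
    lpNormSqGrad p (c • x) = c • lpNormSqGrad p x := by
  rcases eq_or_ne c 0 with rfl | hc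
  · ext j
    simp [lpNormSqGrad]
  ext j
  have hc' : 0 < |c| := abs_pos.2 hc
  have hcancel : (|c| ^ p) ^ (2 / p - 1) * |c| ^ (p - 2) = 1 := by
    rw [← rpow_mul hc'.le, ← rpow_add hc',
      show p * (2 / p - 1) + (p - 2) = 0 by field_simp; ring, rpow_zero]
  simp only [lpNormSqGrad, lpPowSum_smul, Pi.smul_apply, smul_eq_mul, abs_mul,
    mul_rpow (rpow_nonneg (abs_nonneg c) p) (lpPowSum_nonneg p x),
    mul_rpow (abs_nonneg c) (abs_nonneg _)]
  linear_combination (2 * lpPowSum p x ^ (2 / p - 1) * (|x j| ^ (p - 2) * x j) * c) * hcancel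

lemma lpNormSqGrad_dotProduct_self (hp : 0 < p) (x : ι → ℝ) :
    lpNormSqGrad p x ⬝ᵥ x = 2 * lpNormSq p x := by
  have hterm : ∀ j, |x j| ^ (p - 2) * x j * x j = |x j| ^ p := fun j => by
    rcases eq_or_ne (x j) 0 with h | h
    · simp [h, zero_rpow hp.ne']
    · rw [mul_assoc, ← sq, ← sq_abs, ← rpow_natCast, ← rpow_add (abs_pos.2 h)]
      norm_num
  rcases eq_or_ne x 0 with rfl | hx
  · simp [lpNormSq, lpPowSum, zero_rpow hp.ne', zero_rpow (div_pos two_pos hp).ne']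
  simp only [dotProduct, lpNormSqGrad, mul_assoc, ← mul_sum, hterm]
  change 2 * (lpPowSum p x ^ (2 / p - 1) * lpPowSum p x) = _
  rw [lpNormSq, ← rpow_add_one (lpPowSum_pos p hx).ne', sub_add_cancel]

lemma hasDerivAt_lpPowSum_line (hp : 1 < p) (x y : ι → ℝ) (t : ℝ) :
    HasDerivAt (fun t => lpPowSum p (x + t • y))
      (p * ∑ j, |(x + t • y) j| ^ (p - 2) * (x + t • y) j * y j) t := by
  rw [mul_sum]
  refine HasDerivAt.fun_sum fun j _ => ?_
  exact ((hasDerivAt_abs_rpow _ hp).comp t (hasDerivAt_add_smul_apply x y j t)).congr_deriv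
    (by ring)

lemma hasDerivAt_sum_abs_rpow_mul_line (hp : 2 < p) (x y : ι → ℝ) (t : ℝ) :
    HasDerivAt (fun t => ∑ j, |(x + t • y) j| ^ (p - 2) * (x + t • y) j * y j)
      ((p - 1) * ∑ j, |(x + t • y) j| ^ (p - 2) * y j ^ 2) t := by
  rw [mul_sum]
  refine HasDerivAt.fun_sum fun j _ => ?_
  refine (((hasDerivAt_abs_rpow_mul_self (by linarith) _).comp t
    (hasDerivAt_add_smul_apply x y j t)).mul_const (y j)).congr_deriv ?_
  ring

lemma hasDerivAt_lpNormSq_line (hp : 1 < p) {x y : ι → ℝ} {t : ℝ} (hxy : x + t • y ≠ 0) :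
    HasDerivAt (fun t => lpNormSq p (x + t • y)) (lpNormSqGrad p (x + t • y) ⬝ᵥ y) t := by
  refine ((hasDerivAt_lpPowSum_line hp x y t).rpow_const
    (Or.inl (lpPowSum_pos p hxy).ne')).congr_deriv ?_
  simp only [dotProduct, lpNormSqGrad, mul_sum, sum_mul]
  refine sum_congr rfl fun j _ => ?_
  field_simp

lemma sum_abs_rpow_mul_sq_le (hp : 2 < p) (a b : ι → ℝ) :
    ∑ j, |a j| ^ (p - 2) * b j ^ 2 ≤ lpPowSum p a ^ ((p - 2) / p) * lpNormSq p b := by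
  have hconj : (p / (p - 2)).HolderConjugate (p / 2) :=
    Real.holderConjugate_iff.2 ⟨(one_lt_div (by linarith)).2 (by linarith), by field_simp; ring⟩
  convert inner_le_Lp_mul_Lq_of_nonneg univ hconj (f := fun j => |a j| ^ (p - 2))
    (g := fun j => b j ^ 2) (fun _ _ => rpow_nonneg (abs_nonneg _) _) (fun _ _ => sq_nonneg _)
    using 2
  · rw [one_div_div, lpPowSum]
    congr 1
    refine sum_congr rfl fun j _ => ?_
    rw [← rpow_mul (abs_nonneg _), mul_div_cancel₀ _ (by linarith : p - 2 ≠ 0)]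
  · rw [one_div_div, lpNormSq, lpPowSum]
    congr 1
    refine sum_congr rfl fun j _ => ?_
    rw [← sq_abs, ← rpow_two, ← rpow_mul (abs_nonneg _), mul_div_cancel₀ _ two_ne_zero]

lemma lpNormSq_add_le_of_forall_ne_zero (hp : 2 < p) {x y : ι → ℝ}
    (hxy : ∀ t : ℝ, x + t • y ≠ 0) :
    lpNormSq p (x + y) ≤ lpNormSq p x + lpNormSqGrad p x ⬝ᵥ y + (p - 1) * lpNormSq p y := by
  set A := fun t : ℝ => lpPowSum p (x + t • y)
  set B := fun t : ℝ => ∑ j, |(x + t • y) j| ^ (p - 2) * (x + t • y) j * y j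
  set C := fun t : ℝ => ∑ j, |(x + t • y) j| ^ (p - 2) * y j ^ 2
  have hA_pos : ∀ t, 0 < A t := fun t => lpPowSum_pos p (hxy t)
  have hgrad : ∀ t, lpNormSqGrad p (x + t • y) ⬝ᵥ y = 2 * A t ^ (2 / p - 1) * B t := fun t => by
    simp only [dotProduct, lpNormSqGrad, A, B, mul_sum, mul_assoc]
  have hF : ∀ t, HasDerivAt (fun t => lpNormSq p (x + t • y))
      (lpNormSqGrad p (x + t • y) ⬝ᵥ y) t := fun t =>
    hasDerivAt_lpNormSq_line (by linarith) (hxy t)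
  have hF' : ∀ t, HasDerivAt (fun t => lpNormSqGrad p (x + t • y) ⬝ᵥ y)
      (2 * ((2 / p - 1) * A t ^ (2 / p - 2) * (p * B t)) * B t
        + 2 * A t ^ (2 / p - 1) * ((p - 1) * C t)) t := fun t => by
    simp_rw [hgrad]
    have hApow : HasDerivAt (fun t => A t ^ (2 / p - 1))
        ((2 / p - 1) * A t ^ (2 / p - 2) * (p * B t)) t := by
      refine ((hasDerivAt_lpPowSum_line (by linarith) x y t).rpow_const
        (Or.inl (hA_pos t).ne')).congr_deriv ?_
      rw [show 2 / p - 1 - 1 = 2 / p - 2 by ring]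
      ring
    exact (hApow.const_mul 2).mul (hasDerivAt_sum_abs_rpow_mul_line hp x y t)
  have hF'' : ∀ t, 2 * ((2 / p - 1) * A t ^ (2 / p - 2) * (p * B t)) * B t
      + 2 * A t ^ (2 / p - 1) * ((p - 1) * C t) ≤ 2 * (p - 1) * lpNormSq p y := fun t => by
    have hfirst : 2 * ((2 / p - 1) * A t ^ (2 / p - 2) * (p * B t)) * B t ≤ 0 := by
      rw [show 2 * ((2 / p - 1) * A t ^ (2 / p - 2) * (p * B t)) * B t
          = (4 - 2 * p) * (A t ^ (2 / p - 2) * B t ^ 2) by field_simp; ring]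
      exact mul_nonpos_of_nonpos_of_nonneg (by linarith)
        (mul_nonneg (rpow_nonneg (hA_pos t).le _) (sq_nonneg _))
    have hsecond : A t ^ (2 / p - 1) * C t ≤ lpNormSq p y := calc
      A t ^ (2 / p - 1) * C t
          ≤ A t ^ (2 / p - 1) * (A t ^ ((p - 2) / p) * lpNormSq p y) :=
        mul_le_mul_of_nonneg_left (sum_abs_rpow_mul_sq_le hp _ y) (rpow_nonneg (hA_pos t).le _)
      _ = lpNormSq p y := by
        rw [← mul_assoc, ← rpow_add (hA_pos t),
          show 2 / p - 1 + (p - 2) / p = 0 by field_simp; ring, rpow_zero, one_mul]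
    nlinarith
  have := le_add_deriv_add_of_deriv2_le hF hF' hF''
  simp only [one_smul, zero_smul, add_zero] at this
  linarith

lemma lpNormSq_smul_add_le (hp : 2 ≤ p) (c : ℝ) (y : ι → ℝ) :
    lpNormSq p (c • y + y) ≤
      lpNormSq p (c • y) + lpNormSqGrad p (c • y) ⬝ᵥ y + (p - 1) * lpNormSq p y := by
  have hp0 : 0 < p := by linarith
  rw [show c • y + y = (c + 1) • y by rw [add_smul, one_smul], lpNormSq_smul hp0,
    lpNormSq_smul hp0, lpNormSqGrad_smul hp0, smul_dotProduct, lpNormSqGrad_dotProduct_self hp0,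
    smul_eq_mul]
  nlinarith [lpNormSq_nonneg p y]

theorem lpNormSq_add_le (hp : 2 < p) (x y : ι → ℝ) :
    lpNormSq p (x + y) ≤ lpNormSq p x + lpNormSqGrad p x ⬝ᵥ y + (p - 1) * lpNormSq p y := by
  -- `lpPowSum p` vanishes only at `0`, where `lpNormSq p` need not be twice differentiable;
  -- a line through `0` is handled by homogeneity instead.
  by_cases h : ∃ t : ℝ, x + t • y = 0
  · obtain ⟨t, ht⟩ := h
    rw [eq_neg_of_add_eq_zero_left ht, ← neg_smul]
    exact lpNormSq_smul_add_le hp.le _ _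
  · exact lpNormSq_add_le_of_forall_ne_zero hp (not_exists.1 h)

lemma lpNormSq_eq_sq (p : ℝ) (x : ι → ℝ) : lpNormSq p x = (lpPowSum p x ^ (1 / p)) ^ 2 := by
  rw [← rpow_two, ← rpow_mul (lpPowSum_nonneg p x), lpNormSq]
  ring_nf

lemma abs_rpow_le_lpPowSum (p : ℝ) (x : ι → ℝ) (j : ι) : |x j| ^ p ≤ lpPowSum p x :=
  single_le_sum (fun i _ => rpow_nonneg (abs_nonneg (x i)) p) (mem_univ j)

lemma norm_le_lpPowSum_rpow (hp : 0 < p) (x : ι → ℝ) : ‖x‖ ≤ lpPowSum p x ^ (1 / p) := by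
  refine (pi_norm_le_iff_of_nonneg (rpow_nonneg (lpPowSum_nonneg p x) _)).2 fun j => ?_
  calc ‖x j‖ = (|x j| ^ p) ^ (1 / p) := by
        rw [← rpow_mul (abs_nonneg _), mul_one_div_cancel hp.ne', rpow_one, Real.norm_eq_abs]
    _ ≤ lpPowSum p x ^ (1 / p) :=
        rpow_le_rpow (rpow_nonneg (abs_nonneg _) _) (abs_rpow_le_lpPowSum p x j) (by positivity)

lemma lpPowSum_rpow_le (hp : 0 < p) (x : ι → ℝ) :
    lpPowSum p x ^ (1 / p) ≤ (Fintype.card ι : ℝ) ^ (1 / p) * ‖x‖ := by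
  have hsum : lpPowSum p x ≤ Fintype.card ι * ‖x‖ ^ p := by
    calc lpPowSum p x ≤ ∑ _j : ι, ‖x‖ ^ p := sum_le_sum fun j _ =>
          rpow_le_rpow (abs_nonneg _) (by simpa using norm_le_pi_norm x j) hp.le
      _ = Fintype.card ι * ‖x‖ ^ p := by rw [sum_const, card_univ, nsmul_eq_mul]
  calc lpPowSum p x ^ (1 / p) ≤ (Fintype.card ι * ‖x‖ ^ p) ^ (1 / p) :=
        rpow_le_rpow (lpPowSum_nonneg p x) hsum (by positivity)
    _ = (Fintype.card ι : ℝ) ^ (1 / p) * ‖x‖ := by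
        rw [mul_rpow (by positivity) (by positivity), ← rpow_mul (norm_nonneg x),
          mul_one_div_cancel hp.ne', rpow_one]

lemma sq_norm_le_lpNormSq (hp : 0 < p) (x : ι → ℝ) : ‖x‖ ^ 2 ≤ lpNormSq p x := by
  rw [lpNormSq_eq_sq]
  exact pow_le_pow_left₀ (norm_nonneg x) (norm_le_lpPowSum_rpow hp x) 2

lemma lpNormSq_le (hp : 0 < p) (x : ι → ℝ) :
    lpNormSq p x ≤ (Fintype.card ι : ℝ) ^ (2 / p) * ‖x‖ ^ 2 := by
  rw [lpNormSq_eq_sq, show (2 : ℝ) / p = 1 / p * (2 : ℕ) by ring,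
    rpow_mul_natCast (Nat.cast_nonneg _), ← mul_pow]
  exact pow_le_pow_left₀ (rpow_nonneg (lpPowSum_nonneg p x) _) (lpPowSum_rpow_le hp x) 2

lemma norm_lpNormSqGrad_le (hp : 1 ≤ p) (x : ι → ℝ) :
    ‖lpNormSqGrad p x‖ ≤ 2 * (Fintype.card ι : ℝ) ^ (1 / p) * ‖x‖ := by
  have hp0 : 0 < p := by linarith
  rcases eq_or_ne x 0 with rfl | hx
  · rw [norm_zero, mul_zero, norm_le_zero_iff]
    ext j
    simp [lpNormSqGrad]
  have hA := lpPowSum_pos p hx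
  have hcoord : ∀ j, |x j| ^ (p - 2) * |x j| ≤ lpPowSum p x ^ ((p - 1) / p) := fun j => by
    rcases eq_or_ne (x j) 0 with h | h
    · simp [h, rpow_nonneg hA.le]
    rw [← rpow_add_one (abs_ne_zero.2 h), show p - 2 + 1 = p * ((p - 1) / p) by field_simp; ring,
      rpow_mul (abs_nonneg _)]
    exact rpow_le_rpow (rpow_nonneg (abs_nonneg _) _) (abs_rpow_le_lpPowSum p x j)
      (div_nonneg (by linarith) hp0.le)
  refine (pi_norm_le_iff_of_nonneg (by positivity)).2 fun j => ?_
  calc ‖lpNormSqGrad p x j‖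
      = 2 * lpPowSum p x ^ (2 / p - 1) * (|x j| ^ (p - 2) * |x j|) := by
        simp only [lpNormSqGrad, Real.norm_eq_abs, abs_mul, abs_two,
          abs_of_nonneg (rpow_nonneg (lpPowSum_nonneg p x) _),
          abs_of_nonneg (rpow_nonneg (abs_nonneg _) _)]
    _ ≤ 2 * lpPowSum p x ^ (2 / p - 1) * lpPowSum p x ^ ((p - 1) / p) :=
        mul_le_mul_of_nonneg_left (hcoord j) (by positivity)
    _ = 2 * lpPowSum p x ^ (1 / p) := by
        rw [mul_assoc, ← rpow_add hA, show 2 / p - 1 + (p - 1) / p = 1 / p by field_simp; ring]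
    _ ≤ 2 * (Fintype.card ι : ℝ) ^ (1 / p) * ‖x‖ := by
        rw [mul_assoc]
        exact mul_le_mul_of_nonneg_left (lpPowSum_rpow_le hp0 x) two_pos.le

lemma measurable_lpNormSq (p : ℝ) : Measurable (lpNormSq (ι := ι) p) := by
  unfold lpNormSq lpPowSum
  fun_prop

lemma measurable_lpNormSqGrad (p : ℝ) : Measurable (lpNormSqGrad (ι := ι) p) := by
  unfold lpNormSqGrad lpPowSum
  fun_prop

end LpNormSq

section Nemirovski

variable {Ω ι κ : Type*} [MeasurableSpace Ω] {μ : Measure Ω} [Fintype ι]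

lemma MeasureTheory.MemLp.integrable_comp_of_norm_le_sq {E : Type*} [NormedAddCommGroup E]
    [MeasurableSpace E] [BorelSpace E] {f : Ω → E} (hf : MemLp f 2 μ) {Φ : E → ℝ} {C : ℝ}
    (hΦ : Measurable Φ) (hΦC : ∀ x, ‖Φ x‖ ≤ C * ‖x‖ ^ 2) :
    Integrable (fun ω => Φ (f ω)) μ :=
  ((hf.integrable_norm_pow two_ne_zero).const_mul C).mono'
    (hΦ.comp_aemeasurable hf.aestronglyMeasurable.aemeasurable).aestronglyMeasurable
    (Eventually.of_forall fun ω => hΦC (f ω))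

lemma ProbabilityTheory.IndepFun.integrable_dotProduct {X Y : Ω → ι → ℝ} (hXY : IndepFun X Y μ)
    (hX : Integrable X μ) (hY : Integrable Y μ) : Integrable (fun ω => X ω ⬝ᵥ Y ω) μ :=
  integrable_finsetSum _ fun j _ => (hXY.comp (measurable_pi_apply j)
    (measurable_pi_apply j)).integrable_mul (hX.eval j) (hY.eval j)

lemma ProbabilityTheory.IndepFun.integral_dotProduct_eq_zero {X Y : Ω → ι → ℝ}
    (hXY : IndepFun X Y μ) (hX : Integrable X μ) (hY : Integrable Y μ) (hY0 : ∫ ω, Y ω ∂μ = 0) :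
    ∫ ω, X ω ⬝ᵥ Y ω ∂μ = 0 := by
  have hXYj : ∀ j, IndepFun (fun ω => X ω j) (fun ω => Y ω j) μ := fun j =>
    hXY.comp (measurable_pi_apply j) (measurable_pi_apply j)
  have hprod : ∀ j, Integrable (fun ω => X ω j * Y ω j) μ := fun j =>
    (hXYj j).integrable_mul (hX.eval j) (hY.eval j)
  simp only [dotProduct]
  rw [integral_finsetSum _ fun j _ => hprod j]
  refine sum_eq_zero fun j _ => ?_
  rw [(hXYj j).integral_fun_mul_eq_mul_integral (hX.eval j).aestronglyMeasurable
    (hY.eval j).aestronglyMeasurable, ← eval_integral hY.eval, hY0, Pi.zero_apply, mul_zero]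

theorem integral_sum_le_of_smooth [IsFiniteMeasure μ] {Φ : (ι → ℝ) → ℝ}
    {G : (ι → ℝ) → ι → ℝ} {K C D : ℝ} (hΦ : Measurable Φ) (hΦC : ∀ x, ‖Φ x‖ ≤ C * ‖x‖ ^ 2)
    (hG : Measurable G) (hGD : ∀ x, ‖G x‖ ≤ D * ‖x‖)
    (hΦG : ∀ x y, Φ (x + y) ≤ Φ x + G x ⬝ᵥ y + K * Φ y)
    {Y : κ → Ω → ι → ℝ} (hmeas : ∀ i, Measurable (Y i)) (hindep : iIndepFun Y μ)
    (hY : ∀ i, MemLp (Y i) 2 μ) (hmean : ∀ i, ∫ ω, Y i ω ∂μ = 0) (s : Finset κ) :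
    ∫ ω, Φ (∑ i ∈ s, Y i ω) ∂μ ≤ K * ∑ i ∈ s, ∫ ω, Φ (Y i ω) ∂μ := by
  classical
  induction s using Finset.induction_on with
  | empty =>
    have hΦ0 : Φ 0 = 0 := norm_le_zero_iff.1 (by simpa using hΦC 0)
    simp [hΦ0]
  | insert i s hi ih =>
    set S := fun ω => ∑ j ∈ s, Y j ω
    have hS : MemLp S 2 μ := memLp_finsetSum s fun j _ => hY j
    have hSY : IndepFun S (Y i) μ := by
      simpa only [S, ← Finset.sum_apply] using hindep.indepFun_finsetSum_of_notMem hmeas hi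
    have hGS : Integrable (fun ω => G (S ω)) μ :=
      (hS.integrable one_le_two).norm.const_mul D |>.mono'
        (hG.comp_aemeasurable hS.aestronglyMeasurable.aemeasurable).aestronglyMeasurable
        (Eventually.of_forall fun ω => hGD (S ω))
    have hGSY : IndepFun (fun ω => G (S ω)) (Y i) μ := hSY.comp hG measurable_id
    have hΦS := hS.integrable_comp_of_norm_le_sq hΦ hΦC
    have hΦY := (hY i).integrable_comp_of_norm_le_sq hΦ hΦC
    have hcross := hGSY.integrable_dotProduct hGS ((hY i).integrable one_le_two)
    calc ∫ ω, Φ (∑ j ∈ insert i s, Y j ω) ∂μ = ∫ ω, Φ (S ω + Y i ω) ∂μ := by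
          simp only [sum_insert hi, add_comm, S]
      _ ≤ ∫ ω, (Φ (S ω) + G (S ω) ⬝ᵥ Y i ω + K * Φ (Y i ω)) ∂μ :=
          integral_mono ((hS.add (hY i)).integrable_comp_of_norm_le_sq hΦ hΦC)
            ((hΦS.fun_add hcross).fun_add (hΦY.const_mul K)) fun ω => hΦG (S ω) (Y i ω)
      _ = ∫ ω, Φ (S ω) ∂μ + K * ∫ ω, Φ (Y i ω) ∂μ := by
          rw [integral_add (hΦS.fun_add hcross) (hΦY.const_mul K), integral_add hΦS hcross,
            hGSY.integral_dotProduct_eq_zero hGS ((hY i).integrable one_le_two) (hmean i),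
            integral_const_mul, add_zero]
      _ ≤ K * ∑ j ∈ insert i s, ∫ ω, Φ (Y j ω) ∂μ := by
          rw [sum_insert hi]
          linarith

end Nemirovski

theorem stmt_7_general {Ω : Type*} [MeasurableSpace Ω] (μ : Measure Ω) [IsProbabilityMeasure μ]
    (n M : ℕ) (hM : 3 ≤ M) (Y : Fin n → Ω → (Fin M → ℝ))
    (hmeas : ∀ i, Measurable (Y i))
    (hindep : iIndepFun Y μ)
    (hint2 : ∀ i, Integrable (fun ω => ‖Y i ω‖ ^ 2) μ)
    (hmean : ∀ i, ∫ ω, Y i ω ∂μ = 0) :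
    ∫ ω, ‖∑ i, Y i ω‖ ^ 2 ∂μ ≤
      (2 * Real.exp 1 * Real.log M - Real.exp 1) *
        ∑ i, ∫ ω, ‖Y i ω‖ ^ 2 ∂μ := by
  set p := 2 * log M with hp_def
  have hlog : 1 < log M := by
    have : (3 : ℝ) ≤ M := by exact_mod_cast hM
    rw [lt_log_iff_exp_lt (by positivity)]
    exact exp_one_lt_d9.trans_le (by linarith)
  have hp : 2 < p := by linarith
  have hψ_le : ∀ x : Fin M → ℝ, ‖lpNormSq p x‖ ≤ exp 1 * ‖x‖ ^ 2 := fun x => by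
    rw [Real.norm_of_nonneg (lpNormSq_nonneg p x)]
    refine (lpNormSq_le (by linarith) x).trans (mul_le_mul_of_nonneg_right ?_ (sq_nonneg _))
    rw [Fintype.card_fin, hp_def, div_mul_cancel_left₀ two_ne_zero]
    exact rpow_inv_log_le_exp_one
  have hY : ∀ i, MemLp (Y i) 2 μ := fun i =>
    (memLp_two_iff_integrable_sq_norm (hmeas i).aestronglyMeasurable).2 (hint2 i)
  have hS : MemLp (fun ω => ∑ i, Y i ω) 2 μ := memLp_finsetSum _ fun i _ => hY i
  calc ∫ ω, ‖∑ i, Y i ω‖ ^ 2 ∂μ ≤ ∫ ω, lpNormSq p (∑ i, Y i ω) ∂μ :=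
        integral_mono (hS.integrable_norm_pow two_ne_zero)
          (hS.integrable_comp_of_norm_le_sq (measurable_lpNormSq p) hψ_le)
          fun ω => sq_norm_le_lpNormSq (by linarith) _
    _ ≤ (p - 1) * ∑ i, ∫ ω, lpNormSq p (Y i ω) ∂μ :=
        integral_sum_le_of_smooth (measurable_lpNormSq p) hψ_le (measurable_lpNormSqGrad p)
          (norm_lpNormSqGrad_le (by linarith)) (lpNormSq_add_le hp) hmeas hindep hY hmean univ
    _ ≤ (p - 1) * ∑ i, exp 1 * ∫ ω, ‖Y i ω‖ ^ 2 ∂μ := by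
        refine mul_le_mul_of_nonneg_left (sum_le_sum fun i _ => ?_) (by linarith)
        rw [← integral_const_mul]
        exact integral_mono ((hY i).integrable_comp_of_norm_le_sq (measurable_lpNormSq p) hψ_le)
          ((hint2 i).const_mul _) fun ω => (le_abs_self _).trans (hψ_le _)
    _ = (2 * exp 1 * log M - exp 1) * ∑ i, ∫ ω, ‖Y i ω‖ ^ 2 ∂μ := by
        rw [← mul_sum]
        ring

theorem stmt_7 {Ω : Type*} [MeasurableSpace Ω] (μ : Measure Ω) [IsProbabilityMeasure μ]
    (n M : ℕ) (hM : 3 ≤ M) (Y : Fin n → Ω → (Fin M → ℝ))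
    (hmeas : ∀ i, Measurable (Y i))
    (hindep : iIndepFun Y μ)
    (hint : ∀ i, Integrable (Y i) μ)
    (hint2 : ∀ i, Integrable (fun ω => ‖Y i ω‖ ^ 2) μ)
    (hmean : ∀ i, ∫ ω, Y i ω ∂μ = 0) :
    ∫ ω, ‖∑ i, Y i ω‖ ^ 2 ∂μ ≤
      (2 * Real.exp 1 * Real.log M - Real.exp 1) *
        ∑ i, ∫ ω, ‖Y i ω‖ ^ 2 ∂μ :=
  stmt_7_general μ n M hM Y hmeas hindep hint2 hmean
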